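/- Let M be an n×n matrix over ℚ[t,t⁻¹] such that every entry of M is a nonzero Laurent polynomial with positive coefficients, and suppose some entry of M has spread at least one. Then there exists k ≥ 1 such that every entry of M^k has spread at least one. -/

import Mathlib

/-!
Nonnegative coefficients cannot cancel in a matrix product. Hence, for exponents `c` of `M i i₀`
and `d` of `M j₀ j`, every exponent `x` of `M i₀ j₀` gives the exponent `c + x + d` of
`(M ^ 3) i j` along the path `i → i₀ → j₀ → j`, and two distinct exponents of `M i₀ j₀` give two
distinct exponents of every entry of `M ^ 3`.
-/

noncomputable def spread (p : LaurentPolynomial ℚ) : ℤ :=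
  p.coeff.support.max.unbotD 0 - p.coeff.support.min.untopD 0

def PosCoeffs (p : LaurentPolynomial ℚ) : Prop := ∀ m ∈ p.coeff.support, 0 < p.coeff m

namespace AddMonoidAlgebra

variable {R G : Type*} [Semiring R] [PartialOrder R] [IsOrderedRing R] [AddMonoid G]
  {p q : AddMonoidAlgebra R G}

theorem coeff_mul_nonneg (hp : 0 ≤ p.coeff) (hq : 0 ≤ q.coeff) : 0 ≤ (p * q).coeff := by
  classical
  intro m
  rw [coeff_mul]
  refine Finsupp.sum_nonneg' fun a ↦ Finsupp.sum_nonneg' fun b ↦ ?_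
  split_ifs
  · exact mul_nonneg (hp a) (hq b)
  · exact le_rfl

theorem coeff_mul_coeff_le_coeff_mul (hp : 0 ≤ p.coeff) (hq : 0 ≤ q.coeff) (a b : G) :
    p.coeff a * q.coeff b ≤ (p * q).coeff (a + b) := by
  classical
  by_cases ha : a ∈ p.coeff.support
  swap
  · rw [Finsupp.notMem_support_iff.mp ha, zero_mul]
    exact coeff_mul_nonneg hp hq _
  by_cases hb : b ∈ q.coeff.support
  swap
  · rw [Finsupp.notMem_support_iff.mp hb, mul_zero]
    exact coeff_mul_nonneg hp hq _
  have hterm : ∀ x y, 0 ≤ if x + y = a + b then p.coeff x * q.coeff y else 0 := fun x y ↦ by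
    split_ifs
    · exact mul_nonneg (hp x) (hq y)
    · exact le_rfl
  rw [coeff_mul]
  calc p.coeff a * q.coeff b
      = if a + b = a + b then p.coeff a * q.coeff b else 0 := (if_pos rfl).symm
    _ ≤ q.coeff.sum fun y s ↦ if a + y = a + b then p.coeff a * s else 0 :=
      Finset.single_le_sum (fun y _ ↦ hterm a y) hb
    _ ≤ _ := Finset.single_le_sum (f := fun x ↦ q.coeff.sum fun y s ↦
        if x + y = a + b then p.coeff x * s else 0)
        (fun x _ ↦ Finsupp.sum_nonneg' fun y ↦ hterm x y) ha

end AddMonoidAlgebra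

namespace Matrix

open AddMonoidAlgebra

variable {R G : Type*} [Semiring R] [PartialOrder R] [IsOrderedRing R] [AddMonoid G]
  {l m n : Type*} [Fintype m] {A : Matrix l m (AddMonoidAlgebra R G)}
  {B : Matrix m n (AddMonoidAlgebra R G)}

theorem coeff_mul_apply_nonneg (hA : ∀ i j, 0 ≤ (A i j).coeff) (hB : ∀ i j, 0 ≤ (B i j).coeff)
    (i : l) (k : n) : 0 ≤ ((A * B) i k).coeff := by
  rw [mul_apply, coeff_sum]
  exact Finset.sum_nonneg fun j _ ↦ coeff_mul_nonneg (hA i j) (hB j k)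

theorem coeff_mul_coeff_le_coeff_mul_apply (hA : ∀ i j, 0 ≤ (A i j).coeff)
    (hB : ∀ i j, 0 ≤ (B i j).coeff) (i : l) (j : m) (k : n) (a b : G) :
    (A i j).coeff a * (B j k).coeff b ≤ ((A * B) i k).coeff (a + b) := by
  calc (A i j).coeff a * (B j k).coeff b ≤ (A i j * B j k).coeff (a + b) :=
        coeff_mul_coeff_le_coeff_mul (hA i j) (hB j k) a b
    _ ≤ ∑ j', (A i j' * B j' k).coeff (a + b) :=
        Finset.single_le_sum (fun j' _ ↦ coeff_mul_nonneg (hA i j') (hB j' k) _)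
          (Finset.mem_univ j)
    _ = ((A * B) i k).coeff (a + b) := by
        rw [mul_apply, coeff_sum, Finsupp.finsetSum_apply]

end Matrix

theorem spread_eq_max'_sub_min' {p : LaurentPolynomial ℚ} (hp : p.coeff.support.Nonempty) :
    spread p = p.coeff.support.max' hp - p.coeff.support.min' hp := by
  rw [spread, ← Finset.coe_max' hp, ← Finset.coe_min' hp, WithBot.unbotD_coe, WithTop.untopD_coe]

theorem one_le_spread_iff {p : LaurentPolynomial ℚ} :
    1 ≤ spread p ↔ ∃ a ∈ p.coeff.support, ∃ b ∈ p.coeff.support, a < b := by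
  rcases p.coeff.support.eq_empty_or_nonempty with hp | hp
  · simp [spread, hp]
  rw [spread_eq_max'_sub_min' hp]
  constructor
  · intro h
    exact ⟨_, Finset.min'_mem _ hp, _, Finset.max'_mem _ hp, by omega⟩
  · rintro ⟨a, ha, b, hb, hab⟩
    have := Finset.min'_le _ a ha
    have := Finset.le_max' _ b hb
    omega

theorem posCoeffs_iff_nonneg {p : LaurentPolynomial ℚ} : PosCoeffs p ↔ 0 ≤ p.coeff := by
  refine ⟨fun h m ↦ ?_, fun h m hm ↦ (h m).lt_of_ne' (Finsupp.mem_support_iff.mp hm)⟩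
  by_cases hm : m ∈ p.coeff.support
  · exact (h m hm).le
  · simp [Finsupp.notMem_support_iff.mp hm]

open AddMonoidAlgebra Matrix in
theorem stmt_4 (n : ℕ) (M : Matrix (Fin n) (Fin n) (LaurentPolynomial ℚ))
    (h0 : ∀ i j, M i j ≠ 0) (hpos : ∀ i j, PosCoeffs (M i j))
    (hspread : ∃ i j, 1 ≤ spread (M i j)) :
    ∃ k : ℕ, 1 ≤ k ∧ ∀ i j, 1 ≤ spread ((M ^ k) i j) := by
  have hM : ∀ i j, 0 ≤ (M i j).coeff := fun i j ↦ posCoeffs_iff_nonneg.mp (hpos i j)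
  obtain ⟨i₀, j₀, hs⟩ := hspread
  obtain ⟨a, ha, b, hb, hab⟩ := one_le_spread_iff.mp hs
  refine ⟨3, by norm_num, fun i j ↦ one_le_spread_iff.mpr ?_⟩
  obtain ⟨c, hc⟩ := Finsupp.support_nonempty_iff.mpr (coeff_eq_zero.not.mpr (h0 i i₀))
  obtain ⟨d, hd⟩ := Finsupp.support_nonempty_iff.mpr (coeff_eq_zero.not.mpr (h0 j₀ j))
  have hpath : ∀ x ∈ (M i₀ j₀).coeff.support, c + x + d ∈ ((M ^ 3) i j).coeff.support := by
    intro x hx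
    rw [Finsupp.mem_support_iff, pow_succ, sq]
    refine ne_of_gt ?_
    calc 0 < (M i i₀).coeff c * (M i₀ j₀).coeff x * (M j₀ j).coeff d :=
          mul_pos (mul_pos (hpos _ _ c hc) (hpos _ _ x hx)) (hpos _ _ d hd)
      _ ≤ ((M * M) i j₀).coeff (c + x) * (M j₀ j).coeff d := by
          gcongr
          · exact hM j₀ j d
          · exact coeff_mul_coeff_le_coeff_mul_apply hM hM i i₀ j₀ c x
      _ ≤ ((M * M * M) i j).coeff (c + x + d) :=
          coeff_mul_coeff_le_coeff_mul_apply (coeff_mul_apply_nonneg hM hM) hM i j₀ j _ d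
  exact ⟨_, hpath a ha, _, hpath b hb, by omega⟩
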